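/- Let i < j < k < l be four indices in {1, …, n}. Then in H_n the Grassmann–Plücker relation q⁴ (ij)(kl) + q² (ik)(lj) + (il)(jk) = 0 holds, where (lj) = −(jl). -/

import Mathlib

noncomputable section

/-- Generators of the algebra `H q n`: `x i` and `y i` for `i : Fin n`. -/
inductive Gen (n : ℕ) : Type
  | x : Fin n → Gen n
  | y : Fin n → Gen n

open FreeAlgebra in
/-- The defining relations of the braided algebra `H_n`:
`x_i y_i = q y_i x_i`, and for `i < j`:
`x_j x_i = q² x_i x_j`, `y_j y_i = q² y_i y_j`,
`x_j y_i = q y_i x_j + (q² − 1) x_i y_j`, `y_j x_i = q x_i y_j`. -/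
inductive HRel (q : ℂ) (n : ℕ) :
    FreeAlgebra ℂ (Gen n) → FreeAlgebra ℂ (Gen n) → Prop
  | diag (i : Fin n) :
      HRel q n (ι ℂ (Gen.x i) * ι ℂ (Gen.y i)) (q • (ι ℂ (Gen.y i) * ι ℂ (Gen.x i)))
  | xx {i j : Fin n} (h : i < j) :
      HRel q n (ι ℂ (Gen.x j) * ι ℂ (Gen.x i)) ((q ^ 2) • (ι ℂ (Gen.x i) * ι ℂ (Gen.x j)))
  | yy {i j : Fin n} (h : i < j) :
      HRel q n (ι ℂ (Gen.y j) * ι ℂ (Gen.y i)) ((q ^ 2) • (ι ℂ (Gen.y i) * ι ℂ (Gen.y j)))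
  | xy {i j : Fin n} (h : i < j) :
      HRel q n (ι ℂ (Gen.x j) * ι ℂ (Gen.y i))
        (q • (ι ℂ (Gen.y i) * ι ℂ (Gen.x j)) + (q ^ 2 - 1) • (ι ℂ (Gen.x i) * ι ℂ (Gen.y j)))
  | yx {i j : Fin n} (h : i < j) :
      HRel q n (ι ℂ (Gen.y j) * ι ℂ (Gen.x i)) (q • (ι ℂ (Gen.x i) * ι ℂ (Gen.y j)))

/-- The braided module algebra `H_n`. -/
abbrev H (q : ℂ) (n : ℕ) : Type := RingQuot (HRel q n)

/-- The generator `x i` of `H_n`. -/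
def X (q : ℂ) {n : ℕ} (i : Fin n) : H q n :=
  RingQuot.mkAlgHom ℂ (HRel q n) (FreeAlgebra.ι ℂ (Gen.x i))

/-- The generator `y i` of `H_n`. -/
def Y (q : ℂ) {n : ℕ} (i : Fin n) : H q n :=
  RingQuot.mkAlgHom ℂ (HRel q n) (FreeAlgebra.ι ℂ (Gen.y i))

/-- The bracket symbol `(ij) = q^{-1/2} x_i y_j - q^{1/2} y_i x_j`, where `s = q^{1/2}`. -/
def br (q s : ℂ) {n : ℕ} (i j : Fin n) : H q n :=
  s⁻¹ • (X q i * Y q j) - s • (Y q i * X q j)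

section Aux

variable (q : ℂ) {n : ℕ}

lemma rXX {a b : Fin n} (h : a < b) :
    X q b * X q a = (q ^ 2) • (X q a * X q b) := by
  have := RingQuot.mkAlgHom_rel ℂ (HRel.xx (q := q) h)
  simpa only [map_mul, map_smul, X] using this

lemma rYY {a b : Fin n} (h : a < b) :
    Y q b * Y q a = (q ^ 2) • (Y q a * Y q b) := by
  have := RingQuot.mkAlgHom_rel ℂ (HRel.yy (q := q) h)
  simpa only [map_mul, map_smul, Y] using this

lemma rXY {a b : Fin n} (h : a < b) :
    X q b * Y q a = q • (Y q a * X q b) + (q ^ 2 - 1) • (X q a * Y q b) := by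
  have := RingQuot.mkAlgHom_rel ℂ (HRel.xy (q := q) h)
  simpa only [map_mul, map_smul, map_add, X, Y] using this

lemma rYX {a b : Fin n} (h : a < b) :
    Y q b * X q a = q • (X q a * Y q b) := by
  have := RingQuot.mkAlgHom_rel ℂ (HRel.yx (q := q) h)
  simpa only [map_mul, map_smul, X, Y] using this

lemma wXX {a b : Fin n} (h : a < b) (z : H q n) :
    X q b * (X q a * z) = (q ^ 2) • (X q a * (X q b * z)) := by
  rw [← mul_assoc, rXX q h, smul_mul_assoc, mul_assoc]

lemma wYY {a b : Fin n} (h : a < b) (z : H q n) :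
    Y q b * (Y q a * z) = (q ^ 2) • (Y q a * (Y q b * z)) := by
  rw [← mul_assoc, rYY q h, smul_mul_assoc, mul_assoc]

lemma wXY {a b : Fin n} (h : a < b) (z : H q n) :
    X q b * (Y q a * z) =
      q • (Y q a * (X q b * z)) + (q ^ 2 - 1) • (X q a * (Y q b * z)) := by
  rw [← mul_assoc, rXY q h, add_mul, smul_mul_assoc, smul_mul_assoc, mul_assoc, mul_assoc]

lemma wYX {a b : Fin n} (h : a < b) (z : H q n) :
    Y q b * (X q a * z) = q • (X q a * (Y q b * z)) := by
  rw [← mul_assoc, rYX q h, smul_mul_assoc, mul_assoc]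

end Aux

/-- **Grassmann–Plücker relation.**
`q⁴ (ij)(kl) + q² (ik)(lj) + (il)(jk) = 0` for `i < j < k < l`. -/
theorem stmt6 (q s : ℂ) (hq : ‖q‖ = 1) (hq1 : q ≠ 1) (hq2 : q ≠ -1)
    (hq3 : q ≠ Complex.I) (hq4 : q ≠ -Complex.I) (hs : s ^ 2 = q)
    (n : ℕ) (hn : 1 ≤ n) (i j k l : Fin n) (hij : i < j) (hjk : j < k) (hkl : k < l) :
    (q ^ 4) • (br q s i j * br q s k l) + (q ^ 2) • (br q s i k * br q s l j) +
      br q s i l * br q s j k = 0 := by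
  have hik := hij.trans hjk
  have hjl := hjk.trans hkl
  have hil := hij.trans hjl
  have hq0 : q ≠ 0 := by
    intro h; rw [h] at hq; simp at hq
  have hs0 : s ≠ 0 := by
    intro h; rw [h] at hs; simp at hs; exact hq0 hs.symm
  subst hs
  simp only [br, sub_mul, mul_sub, smul_mul_assoc, mul_smul_comm, smul_smul, smul_sub,
    smul_add, mul_add, add_mul, mul_assoc,
    rXX _ hij, rXY _ hij, rYX _ hij, rYY _ hij,
    rXX _ hik, rXY _ hik, rYX _ hik, rYY _ hik,
    rXX _ hil, rXY _ hil, rYX _ hil, rYY _ hil,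
    rXX _ hjk, rXY _ hjk, rYX _ hjk, rYY _ hjk,
    rXX _ hjl, rXY _ hjl, rYX _ hjl, rYY _ hjl,
    rXX _ hkl, rXY _ hkl, rYX _ hkl, rYY _ hkl,
    wXX _ hij, wXY _ hij, wYX _ hij, wYY _ hij,
    wXX _ hik, wXY _ hik, wYX _ hik, wYY _ hik,
    wXX _ hil, wXY _ hil, wYX _ hil, wYY _ hil,
    wXX _ hjk, wXY _ hjk, wYX _ hjk, wYY _ hjk,
    wXX _ hjl, wXY _ hjl, wYX _ hjl, wYY _ hjl,
    wXX _ hkl, wXY _ hkl, wYX _ hkl, wYY _ hkl]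
  match_scalars <;> field_simp <;> ring
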